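/- arXiv:1408.2591 — 5 statements merged into one kernel-verified Lean document; each statement's English description precedes it below -/
import Mathlib

section
/- Let Λ be a discrete subgroup of ℝ^k. Then for any C > 0, the set of primitive subgroups Δ of Λ (i.e. subgroups with ℝ-span(Δ) ∩ Λ = Δ) whose covolume in their ℝ-span is less than C is finite. -/
/-!
A primitive subgroup `Δ ⊆ Λ` is the intersection of `Λ` with its real span, so it is determined
by the row space of a basis matrix `B` of `Δ`, hence by the maximal minors of `B` (Plücker
coordinates). Writing `B = A F` with `F` a basis matrix of `Λ`, the matrix `A` of integer
coordinates has integer maximal minors, which determine those of `B` by the Cauchy–Binet formula.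
Again by Cauchy–Binet, the squares of the maximal minors of `B` sum to a multiple of
`covol(Δ)²`; since `A = B G` for a right inverse `G` of `F`, the minors of `A` are then bounded in
terms of `C`. So only finitely many integer vectors of minors, hence finitely many `Δ`, occur.
-/

open Set

/-- The covolume of the discrete subgroup with ℤ-basis `γ₁, …, γ_m` inside its ℝ-span:
`‖γ₁ ∧ ⋯ ∧ γ_m‖`, computed as the square root of the Gram determinant. -/
noncomputable def covol {k m : ℕ} (γ : Fin m → (Fin k → ℝ)) : ℝ :=
  Real.sqrt (Matrix.det (Matrix.of fun i j => dotProduct (γ i) (γ j)))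

open Matrix Finset Module

namespace Matrix

variable {m n p R : Type*} [Fintype m] [DecidableEq m] [CommRing R]

theorem det_mul_eq_sum_prod_mul_det_submatrix [Fintype n] (A : Matrix m n R)
    (B : Matrix n m R) :
    (A * B).det = ∑ f : m → n, (∏ i, A i (f i)) * (B.submatrix f id).det := by
  have hrows : A * B = fun i => ∑ j, A i j • B j := by
    ext i l
    simp [mul_apply, Finset.sum_apply]
  rw [hrows]
  refine ((detRowAlternating (R := R) (n := m)).map_sum _).trans (sum_congr rfl fun f _ => ?_)
  exact (detRowAlternating (R := R) (n := m)).map_smul_univ _ _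

/-- The Cauchy–Binet formula, summed over all maps `m → n` rather than over increasing ones. -/
theorem factorial_mul_det_mul [Fintype n] (A : Matrix m n R) (B : Matrix n m R) :
    ((Fintype.card m).factorial : R) * (A * B).det
      = ∑ f : m → n, (A.submatrix id f).det * (B.submatrix f id).det := by
  set g : (m → n) → R := fun f => (∏ i, A i (f i)) * (B.submatrix f id).det
  have hA : ∀ f : m → n, (A.submatrix id f).det
      = ∑ σ : Equiv.Perm m, (Equiv.Perm.sign σ : R) * ∏ i, A i (f (σ i)) := fun f => by
    rw [← det_transpose, det_apply']
    rfl
  -- reordering the rows of `B.submatrix f id` by `σ` absorbs the sign of `σ`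
  have hg : ∀ (σ : Equiv.Perm m) (f : m → n),
      (Equiv.Perm.sign σ : R) * (∏ i, A i (f (σ i))) * (B.submatrix f id).det = g (f ∘ σ) := by
    intro σ f
    have : B.submatrix (f ∘ σ) id = (B.submatrix f id).submatrix σ id := rfl
    simp only [g, this, det_permute, Function.comp_apply]
    ring
  calc ((Fintype.card m).factorial : R) * (A * B).det
      = ∑ _σ : Equiv.Perm m, ∑ f, g f := by
        rw [sum_const, card_univ, Fintype.card_perm, nsmul_eq_mul,
          det_mul_eq_sum_prod_mul_det_submatrix]
    _ = ∑ σ : Equiv.Perm m, ∑ f, g (f ∘ σ) := by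
        refine sum_congr rfl fun σ _ => ?_
        exact (Equiv.sum_comp (σ.symm.arrowCongr (Equiv.refl n)) g).symm
    _ = _ := by
        simp_rw [hA, sum_mul, ← hg]
        exact sum_comm

/-- Indexed by all maps `f`, not just increasing ones, the maximal minors are the Plücker
coordinates of the row space of `A`, up to sign and repetition. -/
def maxMinors (A : Matrix m n R) (f : m → n) : R :=
  (A.submatrix id f).det

theorem factorial_mul_maxMinors_mul [Fintype n] [Fintype p] (A : Matrix m n R)
    (B : Matrix n p R) (s : m → p) :
    ((Fintype.card m).factorial : R) * (A * B).maxMinors s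
      = ∑ f : m → n, A.maxMinors f * (B.submatrix f s).det := by
  rw [maxMinors, submatrix_mul _ _ id id s Function.bijective_id, submatrix_id_id,
    factorial_mul_det_mul]
  rfl

theorem factorial_mul_det_mul_transpose [Fintype n] (M : Matrix m n R) :
    ((Fintype.card m).factorial : R) * (M * Mᵀ).det = ∑ f : m → n, M.maxMinors f ^ 2 := by
  rw [factorial_mul_det_mul]
  refine sum_congr rfl fun f _ => ?_
  rw [← transpose_submatrix, det_transpose, sq, maxMinors]

theorem maxMinors_mul_eq_of_maxMinors_eq [Fintype n] [Fintype p] [IsDomain R] [CharZero R]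
    {A₁ A₂ : Matrix m n R} (h : A₁.maxMinors = A₂.maxMinors) (B : Matrix n p R) :
    (A₁ * B).maxMinors = (A₂ * B).maxMinors := by
  funext s
  refine mul_left_cancel₀ (Nat.cast_ne_zero.2 (Fintype.card m).factorial_ne_zero) ?_
  rw [factorial_mul_maxMinors_mul, factorial_mul_maxMinors_mul, h]

theorem exists_maxMinors_ne_zero_of_mul_eq_one [Fintype n] [CharZero R] {A : Matrix m n R}
    {G : Matrix n m R} (h : A * G = 1) : ∃ f, A.maxMinors f ≠ 0 := by
  by_contra! hA
  have := factorial_mul_det_mul A G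
  simp only [maxMinors] at hA
  simp only [h, det_one, mul_one, hA, zero_mul, sum_const_zero] at this
  exact (Fintype.card m).factorial_ne_zero (Nat.cast_eq_zero.1 this)

theorem exists_mul_eq_one_of_linearIndependent_row [Fintype n] {K : Type*} [Field K]
    {A : Matrix m n K} (h : LinearIndependent K A.row) : ∃ G : Matrix n m K, A * G = 1 := by
  rw [← mulVec_surjective_iff_exists_right_inverse, ← coe_mulVecLin, ← LinearMap.range_eq_top]
  apply Submodule.eq_top_of_finrank_eq
  rw [Module.finrank_fintype_fun_eq_card, ← h.rank_matrix]
  rfl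

theorem sq_maxMinors_le [Fintype n] (M : Matrix m n ℝ) (f : m → n) :
    M.maxMinors f ^ 2 ≤ (Fintype.card m).factorial * (M * Mᵀ).det := by
  rw [factorial_mul_det_mul_transpose]
  exact single_le_sum (f := fun g => M.maxMinors g ^ 2) (fun g _ => sq_nonneg _) (mem_univ f)

theorem abs_maxMinors_le [Fintype n] (M : Matrix m n ℝ) (f : m → n) :
    |M.maxMinors f| ≤ √(Fintype.card m).factorial * √(M * Mᵀ).det := by
  rw [← Real.sqrt_mul (Nat.cast_nonneg _)]
  exact Real.abs_le_sqrt (sq_maxMinors_le M f)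

theorem abs_maxMinors_mul_le [Fintype n] [Fintype p] (M : Matrix m n ℝ) (G : Matrix n p ℝ)
    (s : m → p) :
    |(M * G).maxMinors s|
      ≤ √(Fintype.card m).factorial * √(M * Mᵀ).det * ∑ f, |(G.submatrix f s).det| := by
  have hfac : (1 : ℝ) ≤ (Fintype.card m).factorial := Nat.one_le_cast.2 (Nat.factorial_pos _)
  calc |(M * G).maxMinors s|
      ≤ (Fintype.card m).factorial * |(M * G).maxMinors s| :=
        le_mul_of_one_le_left (abs_nonneg _) hfac
    _ = |∑ f, M.maxMinors f * (G.submatrix f s).det| := by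
        rw [← factorial_mul_maxMinors_mul, abs_mul, Nat.abs_cast]
    _ ≤ ∑ f, |M.maxMinors f| * |(G.submatrix f s).det| := by
        simpa only [abs_mul] using
          abs_sum_le_sum_abs (fun f => M.maxMinors f * (G.submatrix f s).det) univ
    _ ≤ _ := by
        rw [mul_sum]
        exact sum_le_sum fun f _ =>
          mul_le_mul_of_nonneg_right (abs_maxMinors_le M f) (abs_nonneg _)

section Field

variable {K : Type*} [Field K]

theorem span_row_mul_of_isUnit {Q : Matrix m m K} (hQ : IsUnit Q) (A : Matrix m n K) :
    Submodule.span K (Set.range (Q * A).row) = Submodule.span K (Set.range A.row) := by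
  have : (Q * A).vecMulLinear = A.vecMulLinear ∘ₗ Q.vecMulLinear :=
    LinearMap.ext fun x => (vecMul_vecMul x Q A).symm
  rw [← range_vecMulLinear, ← range_vecMulLinear, this, LinearMap.range_comp_of_range_eq_top]
  exact LinearMap.range_eq_top.2 (vecMul_surjective_iff_isUnit.2 hQ)

theorem eq_maxMinors_update_of_submatrix_eq_one {N : Matrix m n K} {S : m → n}
    (hN : N.submatrix id S = 1) (i : m) (j : n) :
    N i j = N.maxMinors (Function.update S i j) := by
  have : N.submatrix id (Function.update S i j)
      = (N.submatrix id S).updateCol i fun l => N l j := by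
    ext a b
    rcases eq_or_ne b i with rfl | hb
    · simp
    · simp [hb]
  rw [maxMinors, this, hN, ← cramer_apply, cramer_one]
  rfl

theorem maxMinors_inv_submatrix_mul (A : Matrix m n K) (S s : m → n) :
    ((A.submatrix id S)⁻¹ * A).maxMinors s = (A.maxMinors S)⁻¹ * A.maxMinors s := by
  rw [maxMinors, submatrix_mul _ _ id id s Function.bijective_id, submatrix_id_id, det_mul,
    det_nonsing_inv, Ring.inverse_eq_inv']
  rfl

theorem span_row_eq_of_maxMinors_eq {M M' : Matrix m n K} (h : M.maxMinors = M'.maxMinors)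
    {S : m → n} (hS : M.maxMinors S ≠ 0) :
    Submodule.span K (Set.range M.row) = Submodule.span K (Set.range M'.row) := by
  have hS' : M'.maxMinors S ≠ 0 := h ▸ hS
  -- after normalizing the columns `S` to the identity, the entries are themselves minors
  have hnorm : ∀ {A : Matrix m n K}, A.maxMinors S ≠ 0 →
      ((A.submatrix id S)⁻¹ * A).submatrix id S = 1 := fun hA => by
    rw [submatrix_mul _ _ id id S Function.bijective_id, submatrix_id_id,
      nonsing_inv_mul _ (isUnit_iff_ne_zero.2 hA)]
  have hN : (M.submatrix id S)⁻¹ * M = (M'.submatrix id S)⁻¹ * M' := by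
    ext i j
    rw [eq_maxMinors_update_of_submatrix_eq_one (hnorm hS),
      eq_maxMinors_update_of_submatrix_eq_one (hnorm hS'), maxMinors_inv_submatrix_mul,
      maxMinors_inv_submatrix_mul, h]
  have hunit : ∀ {A : Matrix m n K}, A.maxMinors S ≠ 0 → IsUnit (A.submatrix id S)⁻¹ :=
    fun hA => isUnit_nonsing_inv_iff.2 ((isUnit_iff_isUnit_det _).2 (isUnit_iff_ne_zero.2 hA))
  rw [← span_row_mul_of_isUnit (hunit hS), ← span_row_mul_of_isUnit (hunit hS') M', hN]

end Field

end Matrix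

theorem Submodule.linearIndependent_coe_basis_of_discreteTopology {E ι : Type*}
    [NormedAddCommGroup E] [NormedSpace ℝ E] [FiniteDimensional ℝ E]
    (Δ : Submodule ℤ E) [DiscreteTopology Δ] (b : Basis ι ℤ Δ) :
    LinearIndependent ℝ fun i => (b i : E) := by
  -- inside its real span `V`, the subgroup `Δ` is a full lattice, so `b` is a real basis of `V`
  let V := Submodule.span ℝ (Δ : Set E)
  let Δ₀ := Δ.comap (V.subtype.restrictScalars ℤ)
  have h_img : V.subtype '' Δ₀ = Δ := by
    rw [← LinearMap.coe_restrictScalars ℤ V.subtype, ← Submodule.map_coe,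
      Submodule.map_comap_eq_self]
    exact fun x hx ↦ LinearMap.mem_range.mpr ⟨⟨x, Submodule.subset_span hx⟩, rfl⟩
  have : DiscreteTopology Δ₀ :=
    DiscreteTopology.preimage_of_continuous_injective (Δ : Set E)
      (LinearMap.continuous_of_finiteDimensional V.subtype) (Submodule.injective_subtype _)
  have : IsZLattice ℝ Δ₀ := ⟨by
    rw [← (Submodule.map_injective_of_injective (Submodule.injective_subtype _)).eq_iff,
      Submodule.map_span, Submodule.map_top, Submodule.range_subtype, h_img]⟩
  let e : Δ₀ ≃ₗ[ℤ] Δ :=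
    { toFun := fun x => ⟨x.1.1, x.2⟩
      invFun := fun y => ⟨⟨y.1, Submodule.subset_span y.2⟩, y.2⟩
      map_add' := fun _ _ => rfl
      map_smul' := fun _ _ => rfl
      left_inv := fun _ => rfl
      right_inv := fun _ => rfl }
  have h := ((b.map e.symm).ofZLatticeBasis ℝ Δ₀).linearIndependent.map' V.subtype
    (Submodule.ker_subtype V)
  rwa [show V.subtype ∘ (b.map e.symm).ofZLatticeBasis ℝ Δ₀ = fun i => (b i : E) from
    funext fun i => by simp [e]] at h

theorem Submodule.span_coe_eq_span_range_basis {K E ι : Type*} [Ring K] [AddCommGroup E]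
    [Module K E] (Δ : Submodule ℤ E) (b : Basis ι ℤ Δ) :
    Submodule.span K (Δ : Set E) = Submodule.span K (Set.range fun i => (b i : E)) := by
  have : Submodule.span ℤ (Set.range fun i => (b i : E)) = Δ := by
    rw [show (Set.range fun i => (b i : E)) = Δ.subtype '' Set.range b from Set.range_comp _ _,
      ← Submodule.map_span, b.span_eq, Submodule.map_top, Submodule.range_subtype]
  conv_lhs => rw [← this]
  exact Submodule.span_span_of_tower ℤ K _

theorem Set.finite_setOf_forall_abs_intCast_le {κ : Type*} [Finite κ] (K : κ → ℝ) :
    {p : κ → ℤ | ∀ i, |(p i : ℝ)| ≤ K i}.Finite := by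
  refine (Set.Finite.pi (t := fun i => Set.Icc (-⌈K i⌉) ⌈K i⌉) fun i => Set.finite_Icc _ _).subset
    fun p hp i _ => ?_
  have : ((|p i| : ℤ) : ℝ) ≤ ⌈K i⌉ := by
    push_cast
    exact (hp i).trans (Int.le_ceil _)
  exact abs_le.1 (by exact_mod_cast this)

theorem covol_eq_sqrt_det_mul_transpose {k m : ℕ} (γ : Fin m → Fin k → ℝ) :
    covol γ = √(Matrix.of γ * (Matrix.of γ)ᵀ).det :=
  rfl

namespace Module.Basis

variable {k : ℕ} {ι : Type*} [Fintype ι] {Λ : Submodule ℤ (Fin k → ℝ)} (fb : Basis ι ℤ Λ)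

theorem matrix_of_eq_repr_mul {m : Type*} {v : m → Fin k → ℝ} (hv : ∀ i, v i ∈ Λ) :
    Matrix.of v = Matrix.of (fun i j => (fb.repr ⟨v i, hv i⟩ j : ℝ))
      * Matrix.of fun j => (fb j : Fin k → ℝ) := by
  ext i l
  rw [Matrix.of_apply, Matrix.mul_apply]
  conv_lhs =>
    rw [show v i = ((⟨v i, hv i⟩ : Λ) : Fin k → ℝ) from rfl, ← fb.sum_repr ⟨v i, hv i⟩]
  rw [Submodule.coe_sum, Finset.sum_apply]
  simp only [Submodule.coe_smul, Pi.smul_apply, zsmul_eq_mul, Matrix.of_apply]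

variable [DecidableEq ι] {fb} {G : Matrix (Fin k) ι ℝ}

theorem matrix_of_mul_mul_eq (hFG : Matrix.of (fun j => (fb j : Fin k → ℝ)) * G = 1)
    {m : Type*} {v : m → Fin k → ℝ} (hv : ∀ i, v i ∈ Λ) :
    Matrix.of v * G * Matrix.of (fun j => (fb j : Fin k → ℝ)) = Matrix.of v := by
  rw [fb.matrix_of_eq_repr_mul hv, Matrix.mul_assoc _ _ G, hFG, Matrix.mul_one]

theorem exists_maxMinors_matrix_of_mul_eq_intCast
    (hFG : Matrix.of (fun j => (fb j : Fin k → ℝ)) * G = 1) {m : Type*} [Fintype m]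
    [DecidableEq m] {v : m → Fin k → ℝ} (hv : ∀ i, v i ∈ Λ) :
    ∃ p : (m → ι) → ℤ, (Matrix.of v * G).maxMinors = fun T => (p T : ℝ) := by
  refine ⟨(Matrix.of fun i j => fb.repr ⟨v i, hv i⟩ j).maxMinors, funext fun T => ?_⟩
  rw [fb.matrix_of_eq_repr_mul hv, Matrix.mul_assoc, hFG, Matrix.mul_one, Matrix.maxMinors,
    Matrix.maxMinors, Int.cast_det]
  rfl

end Module.Basis

section Primitive

variable {k : ℕ} {ι : Type*} [Fintype ι] [DecidableEq ι] {Λ : Submodule ℤ (Fin k → ℝ)}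
  [DiscreteTopology Λ] {fb : Basis ι ℤ Λ} {G : Matrix (Fin k) ι ℝ}

theorem subsingleton_setOf_primitive_maxMinors_eq
    (hFG : Matrix.of (fun j => (fb j : Fin k → ℝ)) * G = 1) (m : ℕ) (q : (Fin m → ι) → ℝ) :
    {Δ : Submodule ℤ (Fin k → ℝ) | Δ ≤ Λ ∧
      (Submodule.span ℝ (Δ : Set (Fin k → ℝ)) : Set (Fin k → ℝ)) ∩ Λ = Δ ∧
      ∃ b : Basis (Fin m) ℤ Δ,
        (Matrix.of (fun i => (b i : Fin k → ℝ)) * G).maxMinors = q}.Subsingleton := by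
  rintro Δ₁ ⟨hΔ₁, hprim₁, b₁, hq₁⟩ Δ₂ ⟨hΔ₂, hprim₂, b₂, hq₂⟩
  have hminors : (Matrix.of fun i => (b₁ i : Fin k → ℝ)).maxMinors
      = (Matrix.of fun i => (b₂ i : Fin k → ℝ)).maxMinors := by
    rw [← Basis.matrix_of_mul_mul_eq hFG fun i => hΔ₁ (b₁ i).2,
      ← Basis.matrix_of_mul_mul_eq hFG fun i => hΔ₂ (b₂ i).2]
    exact Matrix.maxMinors_mul_eq_of_maxMinors_eq (hq₁.trans hq₂.symm) _
  have : DiscreteTopology Δ₁ := DiscreteTopology.of_subset ‹_› hΔ₁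
  obtain ⟨G₁, hG₁⟩ := Matrix.exists_mul_eq_one_of_linearIndependent_row
    (Δ₁.linearIndependent_coe_basis_of_discreteTopology b₁)
  obtain ⟨S, hS⟩ := Matrix.exists_maxMinors_ne_zero_of_mul_eq_one hG₁
  have hspan : Submodule.span ℝ (Δ₁ : Set (Fin k → ℝ)) = Submodule.span ℝ Δ₂ := by
    rw [Δ₁.span_coe_eq_span_range_basis b₁, Δ₂.span_coe_eq_span_range_basis b₂]
    exact Matrix.span_row_eq_of_maxMinors_eq hminors hS
  exact SetLike.coe_injective (hprim₁.symm.trans (hspan ▸ hprim₂))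

end Primitive

theorem finitely_many_primitive_subgroups_of_small_covolume_general
    (k : ℕ) (Λ : Submodule ℤ (Fin k → ℝ)) (hΛ : DiscreteTopology Λ)
    (C : ℝ) :
    {Δ : Submodule ℤ (Fin k → ℝ) |
      Δ ≤ Λ ∧
      ((Submodule.span ℝ (Δ : Set (Fin k → ℝ)) : Set (Fin k → ℝ)) ∩ (Λ : Set (Fin k → ℝ))
        = (Δ : Set (Fin k → ℝ))) ∧
      ∃ (m : ℕ) (b : Module.Basis (Fin m) ℤ Δ),
        covol (fun i => (b i : Fin k → ℝ)) < C}.Finite := by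
  classical
  let fb := Module.Free.chooseBasis ℤ Λ
  obtain ⟨G, hFG⟩ := Matrix.exists_mul_eq_one_of_linearIndependent_row
    (Λ.linearIndependent_coe_basis_of_discreteTopology fb)
  -- `Δ` is recorded by its rank and by the maximal minors of `B * G` (`B` a basis matrix of `Δ`),
  -- which are integers bounded by `bound`
  let bound (m : ℕ) (T : Fin m → _) : ℝ := √m.factorial * C * ∑ s, |(G.submatrix s T).det|
  refine ((Set.finite_Iic k).biUnion fun m _ =>
    (Set.finite_setOf_forall_abs_intCast_le (bound m)).biUnion fun p _ =>
      (subsingleton_setOf_primitive_maxMinors_eq hFG m fun T => (p T : ℝ)).finite).subset ?_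
  rintro Δ ⟨hΔΛ, hprim, m, b, hcov⟩
  have : DiscreteTopology Δ := DiscreteTopology.of_subset hΛ hΔΛ
  obtain ⟨p, hp⟩ := Basis.exists_maxMinors_matrix_of_mul_eq_intCast hFG fun i => hΔΛ (b i).2
  simp only [Set.mem_iUnion]
  refine ⟨m, ?_, p, fun T => ?_, hΔΛ, hprim, b, hp⟩
  · simpa using (Δ.linearIndependent_coe_basis_of_discreteTopology b).fintype_card_le_finrank
  · rw [← congrFun hp T]
    refine (Matrix.abs_maxMinors_mul_le _ G T).trans ?_
    rw [Fintype.card_fin, ← covol_eq_sqrt_det_mul_transpose]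
    simp only [bound]
    gcongr

/-- For a discrete subgroup `Λ` of `ℝ^k` and any `C > 0`, the set of primitive subgroups
`Δ ⊆ Λ` (i.e. with `ℝ-span(Δ) ∩ Λ = Δ`) of covolume less than `C` is finite. -/
theorem finitely_many_primitive_subgroups_of_small_covolume
    (k : ℕ) (Λ : Submodule ℤ (Fin k → ℝ)) (hΛ : DiscreteTopology Λ)
    (C : ℝ) (hC : 0 < C) :
    {Δ : Submodule ℤ (Fin k → ℝ) |
      Δ ≤ Λ ∧
      ((Submodule.span ℝ (Δ : Set (Fin k → ℝ)) : Set (Fin k → ℝ)) ∩ (Λ : Set (Fin k → ℝ))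
        = (Δ : Set (Fin k → ℝ))) ∧
      ∃ (m : ℕ) (b : Module.Basis (Fin m) ℤ Δ),
        covol (fun i => (b i : Fin k → ℝ)) < C}.Finite :=
  finitely_many_primitive_subgroups_of_small_covolume_general k Λ hΛ C
end

section
/- Let {u_t} be a one-parameter unipotent subgroup of SL(k,ℝ) and Δ a discrete subgroup of ℝ^k. If there exists r > 0 such that ‖u_t Δ‖₀ < r for all t ≥ 0, then ‖u_t Δ‖₀ is constant: ‖u_t Δ‖₀ = ‖Δ‖₀ < r for all t ≥ 0. -/
open Set

/-- The one-parameter unipotent subgroup `u_t = exp (t X)` generated by a nilpotent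
`k × k` matrix `X`. -/
noncomputable def uexp {k : ℕ} (X : Matrix (Fin k) (Fin k) ℝ) (t : ℝ) :
    Matrix (Fin k) (Fin k) ℝ :=
  ∑ i ∈ Finset.range k, (t ^ i / (Nat.factorial i : ℝ)) • X ^ i

/-!
The entries of `u_t` are polynomials in `t`, so the squared covolume
`t ↦ det (⟪u_t γᵢ, u_t γⱼ⟫)` of `u_t Δ` is a real polynomial. Bounded on `[0, ∞)`, it has
degree `≤ 0`, so it is constant, equal to its value `‖Δ‖₀²` at `t = 0`.
-/

open Matrix Polynomial Filter

theorem Polynomial.eval_eq_eval_zero_of_abs_eval_le {p : ℝ[X]} {b : ℝ}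
    (h : ∀ t, 0 ≤ t → |p.eval t| ≤ b) (t : ℝ) : p.eval t = p.eval 0 := by
  have hdeg : p.degree ≤ 0 := (isBoundedUnder_abs_atTop_iff p).mp <|
    isBoundedUnder_of_eventually_le ((eventually_ge_atTop 0).mono h)
  rw [eq_C_of_degree_le_zero hdeg, eval_C, eval_C]

theorem det_gram_nonneg {k m : ℕ} (γ : Fin m → (Fin k → ℝ)) :
    0 ≤ det (of fun i j => γ i ⬝ᵥ γ j) := by
  have hgram : (of fun i j => γ i ⬝ᵥ γ j) = of γ * (of γ)ᴴ := by
    ext i j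
    simp [mul_apply, dotProduct]
  rw [hgram]
  exact (posSemidef_self_mul_conjTranspose _).det_nonneg

theorem uexp_zero {k : ℕ} (X : Matrix (Fin k) (Fin k) ℝ) : uexp X 0 = 1 := by
  rcases Nat.eq_zero_or_pos k with rfl | hk
  · exact Subsingleton.elim _ _
  · rw [uexp, Finset.sum_eq_single_of_mem 0 (Finset.mem_range.mpr hk)]
    · simp
    · intro i _ hi
      simp [zero_pow hi]

noncomputable def uexpPoly {k : ℕ} (X : Matrix (Fin k) (Fin k) ℝ) : Matrix (Fin k) (Fin k) ℝ[X] :=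
  ∑ i ∈ Finset.range k, (C (Nat.factorial i : ℝ)⁻¹ * Polynomial.X ^ i) • X.map C ^ i

theorem mapMatrix_evalRingHom_uexpPoly {k : ℕ} (X : Matrix (Fin k) (Fin k) ℝ) (t : ℝ) :
    (evalRingHom t).mapMatrix (uexpPoly X) = uexp X t := by
  rw [uexpPoly, map_sum, uexp]
  refine Finset.sum_congr rfl fun i _ => ?_
  rw [RingHom.mapMatrix_apply, Matrix.map_smul' _ _ _ (map_mul _), ← RingHom.mapMatrix_apply,
    map_pow, RingHom.mapMatrix_apply, Matrix.map_map]
  simp [div_eq_inv_mul, Function.comp_def]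

noncomputable def gramDetPoly {k m : ℕ} (X : Matrix (Fin k) (Fin k) ℝ)
    (γ : Fin m → (Fin k → ℝ)) : ℝ[X] :=
  det (of fun i j => (uexpPoly X *ᵥ (C ∘ γ i)) ⬝ᵥ (uexpPoly X *ᵥ (C ∘ γ j)))

theorem eval_gramDetPoly {k m : ℕ} (X : Matrix (Fin k) (Fin k) ℝ)
    (γ : Fin m → (Fin k → ℝ)) (t : ℝ) :
    (gramDetPoly X γ).eval t =
      det (of fun i j => (uexp X t *ᵥ γ i) ⬝ᵥ (uexp X t *ᵥ γ j)) := by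
  rw [gramDetPoly, ← coe_evalRingHom, RingHom.map_det, ← mapMatrix_evalRingHom_uexpPoly]
  have hvec (v : Fin k → ℝ) :
      evalRingHom t ∘ (uexpPoly X *ᵥ (C ∘ v)) = (uexpPoly X).map (evalRingHom t) *ᵥ v := by
    ext l
    rw [Function.comp_apply, RingHom.map_mulVec, ← Function.comp_assoc]
    simp [Function.comp_def]
  congr 1
  ext i j
  simp only [RingHom.mapMatrix_apply, map_apply, of_apply, RingHom.map_dotProduct, hvec]

theorem covol_uexp_mulVec {k m : ℕ} (X : Matrix (Fin k) (Fin k) ℝ)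
    (γ : Fin m → (Fin k → ℝ)) (t : ℝ) :
    covol (fun i => uexp X t *ᵥ γ i) = √((gramDetPoly X γ).eval t) := by
  rw [covol, eval_gramDetPoly]

theorem covolume_bounded_implies_constant_general
    (k m : ℕ) (X : Matrix (Fin k) (Fin k) ℝ) (r : ℝ)
    (γ : Fin m → (Fin k → ℝ))
    (h : ∀ t : ℝ, 0 ≤ t → covol (fun i => (uexp X t).mulVec (γ i)) < r) :
    ∀ t : ℝ, 0 ≤ t →
      covol (fun i => (uexp X t).mulVec (γ i)) = covol γ ∧ covol γ < r := by
  have hbound : ∀ s, 0 ≤ s → |(gramDetPoly X γ).eval s| ≤ r ^ 2 := by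
    intro s hs
    have hnonneg : 0 ≤ (gramDetPoly X γ).eval s := eval_gramDetPoly X γ s ▸ det_gram_nonneg _
    have hlt := covol_uexp_mulVec X γ s ▸ h s hs
    rw [abs_of_nonneg hnonneg]
    exact ((Real.sqrt_lt hnonneg ((Real.sqrt_nonneg _).trans hlt.le)).mp hlt).le
  have hconst (t : ℝ) : covol (fun i => uexp X t *ᵥ γ i) = covol γ := by
    rw [covol_uexp_mulVec, eval_eq_eval_zero_of_abs_eval_le hbound, ← covol_uexp_mulVec,
      uexp_zero]
    simp only [one_mulVec]
  intro t ht
  exact ⟨hconst t, hconst t ▸ h t ht⟩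

/-- If `‖u_t Δ‖₀ < r` for all `t ≥ 0`, then `‖u_t Δ‖₀` is constant,
equal to `‖Δ‖₀ < r`, for all `t ≥ 0`. Here `Δ` is the discrete subgroup of `ℝ^k` with
ℤ-basis `γ₁, …, γ_m`. -/
theorem covolume_bounded_implies_constant
    (k m : ℕ) (X : Matrix (Fin k) (Fin k) ℝ) (hX : IsNilpotent X) (r : ℝ)
    (γ : Fin m → (Fin k → ℝ)) (hγ : LinearIndependent ℝ γ)
    (h : ∀ t : ℝ, 0 ≤ t → covol (fun i => (uexp X t).mulVec (γ i)) < r) :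
    ∀ t : ℝ, 0 ≤ t →
      covol (fun i => (uexp X t).mulVec (γ i)) = covol γ ∧ covol γ < r :=
  covolume_bounded_implies_constant_general k m X r γ h
end

section
/- Let H be a connected 2-step nilpotent Lie group with Lie algebra 𝔥, and let Λ be a discrete subgroup of H. Then the ℤ-span of exp⁻¹(Λ) ⊆ 𝔥 is contained in (1/2)·exp⁻¹(Λ). In particular, for X₁,…,X_n ∈ exp⁻¹(Λ), one has 2(X₁+⋯+X_n) ∈ exp⁻¹(Λ). -/
/-!
Writing `x ⋆ y = x + y + ½⁅x, y⁆` for the group law, two-step nilpotency makes all brackets central,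
so the group commutator `x ⋆ y ⋆ (-x) ⋆ (-y)` is the Lie bracket `⁅x, y⁆`; hence `Λ` is closed under
brackets and under doubling. The correction term in `2S ⋆ 2X = 2(S + X) + ⁅2S, X⁆` then lies in `Λ`
and can be cancelled, so `2S ∈ Λ` and `X ∈ Λ` give `2(S + X) ∈ Λ`, and induction along the
additive subgroup generated by `Λ` finishes.
-/

namespace LieAlgebra

variable {K 𝔥 : Type*} [Field K] [LieRing 𝔥] [LieAlgebra K 𝔥]

variable (K) in
/-- The Baker–Campbell–Hausdorff product, which is the group law in exponential coordinates
when the Lie algebra is two-step nilpotent. -/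
def bchMul (x y : 𝔥) : 𝔥 := x + y + (2⁻¹ : K) • ⁅x, y⁆

theorem bchMul_self (x : 𝔥) : bchMul K x x = (2 : K) • x := by
  rw [bchMul, lie_self, smul_zero, add_zero, two_smul]

section TwoStep

variable [CharZero K] (h2 : ∀ x y z : 𝔥, ⁅x, ⁅y, z⁆⁆ = 0)
include h2

theorem lie_lie_eq_zero_of_two_step (x y z : 𝔥) : ⁅⁅x, y⁆, z⁆ = 0 := by
  rw [← lie_skew, h2, neg_zero]

theorem bchMul_bchMul_neg_bchMul_neg (x y : 𝔥) :
    bchMul K (bchMul K (bchMul K x y) (-x)) (-y) = ⁅x, y⁆ := by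
  have h2' := lie_lie_eq_zero_of_two_step h2
  have conj : bchMul K (bchMul K x y) (-x) = y + ⁅x, y⁆ := by
    simp only [bchMul, lie_neg, add_lie, lie_self, smul_lie, h2', smul_zero, add_zero,
      ← lie_skew y x]
    module
  rw [conj]
  simp only [bchMul, lie_neg, add_lie, lie_self, h2', add_zero, neg_zero, smul_zero]
  module

theorem bchMul_two_smul_two_smul (S X : 𝔥) :
    bchMul K (bchMul K ((2 : K) • S) ((2 : K) • X)) (-⁅(2 : K) • S, X⁆) = (2 : K) • (S + X) := by
  simp only [bchMul, lie_neg, smul_lie, lie_smul, h2, smul_zero, add_zero, neg_zero]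
  module

variable {Λ : Set 𝔥} (hmul : ∀ x ∈ Λ, ∀ y ∈ Λ, bchMul K x y ∈ Λ) (hneg : ∀ x ∈ Λ, -x ∈ Λ)
include hmul hneg

theorem lie_mem_of_bchMul_mem {x y : 𝔥} (hx : x ∈ Λ) (hy : y ∈ Λ) : ⁅x, y⁆ ∈ Λ := by
  rw [← bchMul_bchMul_neg_bchMul_neg (K := K) h2]
  exact hmul _ (hmul _ (hmul _ hx _ hy) _ (hneg _ hx)) _ (hneg _ hy)

theorem two_smul_add_mem_of_bchMul_mem {S X : 𝔥} (hS : (2 : K) • S ∈ Λ) (hX : X ∈ Λ) :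
    (2 : K) • (S + X) ∈ Λ := by
  have h2X : (2 : K) • X ∈ Λ := bchMul_self (K := K) X ▸ hmul _ hX _ hX
  have hcomm : ⁅(2 : K) • S, X⁆ ∈ Λ := lie_mem_of_bchMul_mem h2 hmul hneg hS hX
  rw [← bchMul_two_smul_two_smul h2]
  exact hmul _ (hmul _ hS _ h2X) _ (hneg _ hcomm)

theorem two_smul_mem_of_mem_closure_of_bchMul_mem (hzero : (0 : 𝔥) ∈ Λ) {x : 𝔥}
    (hx : x ∈ AddSubgroup.closure Λ) : (2 : K) • x ∈ Λ := by
  induction hx using AddSubgroup.closure_induction_left with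
  | zero => rwa [smul_zero]
  | add_left y hy z _ hz =>
    rw [add_comm]; exact two_smul_add_mem_of_bchMul_mem h2 hmul hneg hz hy
  | neg_add_cancel y hy z _ hz =>
    rw [add_comm]; exact two_smul_add_mem_of_bchMul_mem h2 hmul hneg hz (hneg _ hy)

end TwoStep

end LieAlgebra

theorem zspan_subset_half_of_two_step_general
    {𝔥 : Type*} [LieRing 𝔥] [LieAlgebra ℝ 𝔥]
    (h2 : ∀ x y z : 𝔥, ⁅x, ⁅y, z⁆⁆ = 0)
    (Λ : Set 𝔥)
    (hone : (0 : 𝔥) ∈ Λ)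
    (hmul : ∀ x ∈ Λ, ∀ y ∈ Λ, x + y + (2⁻¹ : ℝ) • ⁅x, y⁆ ∈ Λ)
    (hinv : ∀ x ∈ Λ, -x ∈ Λ) :
    (∀ x ∈ Submodule.span ℤ Λ, (2 : ℝ) • x ∈ Λ) ∧
      ∀ (n : ℕ) (Xs : Fin n → 𝔥), (∀ i, Xs i ∈ Λ) →
        (2 : ℝ) • (∑ i, Xs i) ∈ Λ := by
  have hspan : ∀ x ∈ Submodule.span ℤ Λ, (2 : ℝ) • x ∈ Λ := fun x hx => by
    rw [← Submodule.mem_toAddSubgroup, Submodule.span_int_eq_addSubgroupClosure] at hx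
    exact LieAlgebra.two_smul_mem_of_mem_closure_of_bchMul_mem h2 hmul hinv hone hx
  exact ⟨hspan, fun n Xs hXs =>
    hspan _ (Submodule.sum_mem _ fun i _ => Submodule.subset_span (hXs i))⟩

/-- Let `H` be a connected simply connected 2-step nilpotent Lie group with Lie algebra `𝔥`.
We identify `H` with `𝔥` via the exponential diffeomorphism, so that by the
Baker–Campbell–Hausdorff formula the group multiplication is
`x * y = x + y + ½⁅x, y⁆`. If `Λ ⊆ 𝔥` corresponds to a discrete subgroup of `H`
(`Λ = exp⁻¹` of the subgroup), then the ℤ-span of `Λ` is contained in `½ Λ`;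
in particular, for `X₁, …, X_n ∈ Λ` one has `2(X₁ + ⋯ + X_n) ∈ Λ`. -/
theorem zspan_subset_half_of_two_step
    {𝔥 : Type*} [LieRing 𝔥] [LieAlgebra ℝ 𝔥] [TopologicalSpace 𝔥]
    (h2 : ∀ x y z : 𝔥, ⁅x, ⁅y, z⁆⁆ = 0)
    (Λ : Set 𝔥) (hΛdisc : DiscreteTopology Λ)
    (hone : (0 : 𝔥) ∈ Λ)
    (hmul : ∀ x ∈ Λ, ∀ y ∈ Λ, x + y + (2⁻¹ : ℝ) • ⁅x, y⁆ ∈ Λ)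
    (hinv : ∀ x ∈ Λ, -x ∈ Λ) :
    (∀ x ∈ Submodule.span ℤ Λ, (2 : ℝ) • x ∈ Λ) ∧
      ∀ (n : ℕ) (Xs : Fin n → 𝔥), (∀ i, Xs i ∈ Λ) →
        (2 : ℝ) • (∑ i, Xs i) ∈ Λ :=
  zspan_subset_half_of_two_step_general h2 Λ hone hmul hinv
end

section
/- Let G be an arbitrary Lie group with a norm ‖·‖ on Lie(G) and r₀ > 0 such that log is defined on B_{r₀} = exp({v : ‖v‖ < r₀}). Let Γ be a discrete subgroup of G, {u_t} a one-parameter unipotent subgroup, x ∈ G/Γ. Then for any T > 0 and 0 < δ < r₀, the set {t ∈ [0,T] : G_{u_t x} ∩ B_δ ≠ {e}} has finitely many connected components. -/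
open Set Metric Filter Topology Polynomial

/-!
Conjugating by `u t`, the condition at time `t` says that `g γ g⁻¹` has a logarithm `w` with
`‖Ad(u t) w‖ < δ`. Hence the set in question is the union, over the logarithms `w` of nontrivial
elements of `g Γ g⁻¹` that enter the `δ`-ball during `[0, T]`, of the sublevel sets
`{t ∈ [0, T] | ‖Ad(u t) w‖ < δ}`. Only finitely many `w` occur: the elements `g γ g⁻¹` involved lie
in a compact set, so there are finitely many of them by discreteness of `Γ`, and two logarithms of
the same element which are `δ`-small at nearby times coincide, because `exp` is injective on the
`r₀`-ball. As `t ↦ ‖Ad(u t) w‖²` is a polynomial, every sublevel set has finite frontier, so the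
union is a bounded subset of `ℝ` with finite frontier. Such a set has finitely many components:
the closure of a component is an interval whose endpoints lie in the frontier.
-/

section Components

variable {α : Type*} [TopologicalSpace α]

def connectedComponentsIn (S : Set α) : Set (Set α) :=
  {C | ∃ t ∈ S, C = connectedComponentIn S t}

theorem Set.Finite.frontier_biUnion_subset {ι : Type*} {I : Set ι} (hI : I.Finite)
    (f : ι → Set α) : frontier (⋃ i ∈ I, f i) ⊆ ⋃ i ∈ I, frontier (f i) := by
  rintro x ⟨hcl, hint⟩
  rw [hI.closure_biUnion] at hcl
  obtain ⟨i, hi, hxi⟩ := mem_iUnion₂.1 hcl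
  exact mem_iUnion₂.2 ⟨i, hi, hxi, fun h => hint (interior_mono (subset_biUnion_of_mem hi) h)⟩

theorem frontier_connectedComponentIn_subset [LocallyConnectedSpace α] (S : Set α) (x : α) :
    frontier (connectedComponentIn S x) ⊆ frontier S := by
  rintro y ⟨hcl, hint⟩
  refine ⟨closure_mono (connectedComponentIn_subset S x) hcl, fun hyS => hint ?_⟩
  have hN : IsOpen (connectedComponentIn (interior S) y) := isOpen_interior.connectedComponentIn
  obtain ⟨z, hzN, hzC⟩ := mem_closure_iff.1 hcl _ hN (mem_connectedComponentIn hyS)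
  have hNC : connectedComponentIn (interior S) y ⊆ connectedComponentIn S x := by
    rw [connectedComponentIn_eq hzC]
    exact isPreconnected_connectedComponentIn.subset_connectedComponentIn hzN
      ((connectedComponentIn_subset _ _).trans interior_subset)
  exact interior_maximal hNC hN (mem_connectedComponentIn hyS)

theorem connectedComponentIn_eq_of_closure_eq {S : Set α} {x y : α} (hx : x ∈ S) (hy : y ∈ S)
    (h : closure (connectedComponentIn S x) = closure (connectedComponentIn S y)) :
    connectedComponentIn S x = connectedComponentIn S y := by
  have hunion : IsPreconnected (connectedComponentIn S x ∪ connectedComponentIn S y) :=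
    isPreconnected_connectedComponentIn.subset_closure subset_union_right
      (union_subset (h ▸ subset_closure) subset_closure)
  refine (connectedComponentIn_eq (hunion.subset_connectedComponentIn
    (Or.inr (mem_connectedComponentIn hy))
    (union_subset (connectedComponentIn_subset _ _) (connectedComponentIn_subset _ _))
    (Or.inl (mem_connectedComponentIn hx)))).symm

end Components

theorem IsPreconnected.closure_eq_Icc_csInf_csSup {β : Type*} [ConditionallyCompleteLinearOrder β]
    [TopologicalSpace β] [OrderTopology β] {s : Set β} (hs : IsPreconnected s) (hne : s.Nonempty)
    (hbb : BddBelow s) (hba : BddAbove s) : closure s = Icc (sInf s) (sSup s) :=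
  subset_antisymm (closure_minimal (fun _ hx => ⟨csInf_le hbb hx, le_csSup hba hx⟩) isClosed_Icc)
    (hs.closure.Icc_subset (csInf_mem_closure hne hbb) (csSup_mem_closure hne hba))

theorem Real.finite_connectedComponentsIn_of_finite_frontier {S : Set ℝ}
    (hS : Bornology.IsBounded S) (hfr : (frontier S).Finite) :
    (connectedComponentsIn S).Finite := by
  have hcl : closure '' connectedComponentsIn S ⊆
      (fun p : ℝ × ℝ => Icc p.1 p.2) '' (frontier S ×ˢ frontier S) := by
    rintro _ ⟨_, ⟨t, ht, rfl⟩, rfl⟩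
    have hne : (connectedComponentIn S t).Nonempty := ⟨t, mem_connectedComponentIn ht⟩
    have hb := hS.subset (connectedComponentIn_subset S t)
    have hC := isPreconnected_connectedComponentIn.closure_eq_Icc_csInf_csSup hne hb.bddBelow
      hb.bddAbove
    have hends := frontier_closure_subset.trans (frontier_connectedComponentIn_subset S t)
    rw [hC, frontier_Icc (csInf_le_csSup hne hb.bddBelow hb.bddAbove)] at hends
    exact ⟨(_, _), ⟨hends (mem_insert _ _), hends (mem_insert_of_mem _ rfl)⟩, hC.symm⟩
  refine Finite.of_finite_image (((hfr.prod hfr).image _).subset hcl) ?_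
  rintro _ ⟨x, hx, rfl⟩ _ ⟨y, hy, rfl⟩ h
  exact connectedComponentIn_eq_of_closure_eq hx hy h

theorem Subgroup.finite_inter_of_isCompact {G : Type*} [Group G] [TopologicalSpace G]
    [IsTopologicalGroup G] (Γ : Subgroup G) [DiscreteTopology Γ] {K : Set G} (hK : IsCompact K) :
    ((Γ : Set G) ∩ K).Finite := by
  obtain ⟨U, hU, hUΓ⟩ : ∃ U : Set G, IsOpen U ∧ Subtype.val ⁻¹' U = ({1} : Set Γ) :=
    isOpen_induced_iff.1 (isOpen_discrete {1})
  have h1U : (1 : G) ∈ U := by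
    change (1 : Γ) ∈ Subtype.val ⁻¹' U
    rw [hUΓ]
    rfl
  obtain ⟨V, hV, hVU⟩ := exists_nhds_split_inv (hU.mem_nhds h1U)
  have hlf : LocallyFinite fun γ : Γ => ({(γ : G)} : Set G) := by
    intro x
    refine ⟨(· * x⁻¹) ⁻¹' V,
      (continuous_mul_const x⁻¹).continuousAt.preimage_mem_nhds (by rwa [mul_inv_cancel]),
      Subsingleton.finite ?_⟩
    rintro γ ⟨_, rfl, hγ⟩ γ' ⟨_, rfl, hγ'⟩
    have hdiv : γ / γ' ∈ Subtype.val ⁻¹' U := by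
      simpa [div_eq_mul_inv, mul_assoc] using hVU _ hγ _ hγ'
    rw [hUΓ] at hdiv
    exact div_eq_one.1 hdiv
  refine ((hlf.finite_nonempty_inter_compact hK).image Subtype.val).subset ?_
  rintro x ⟨hxΓ, hxK⟩
  exact ⟨⟨x, hxΓ⟩, ⟨x, rfl, hxK⟩, rfl⟩

theorem Subgroup.finite_conj_inter_of_isCompact {G : Type*} [Group G] [TopologicalSpace G]
    [IsTopologicalGroup G] (Γ : Subgroup G) [DiscreteTopology Γ] (g : G) {K : Set G}
    (hK : IsCompact K) : ((fun γ => g * γ * g⁻¹) '' Γ ∩ K).Finite := by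
  refine ((Γ.finite_inter_of_isCompact
    (hK.image (f := fun h => g⁻¹ * h * g) (by fun_prop))).image
      (fun γ => g * γ * g⁻¹)).subset ?_
  rintro _ ⟨⟨γ, hγ, rfl⟩, hK⟩
  exact ⟨γ, ⟨hγ, _, hK, by group⟩, rfl⟩

section PolynomialCurve

variable {V : Type*} [NormedAddCommGroup V] [NormedSpace ℝ V]

def IsPolynomialCurve (f : ℝ → V) : Prop :=
  ∃ (d : ℕ) (c : Fin d → V), ∀ t, f t = ∑ i : Fin d, t ^ (i : ℕ) • c i

theorem IsPolynomialCurve.continuous {f : ℝ → V} (hf : IsPolynomialCurve f) : Continuous f := by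
  obtain ⟨d, c, hc⟩ := hf
  rw [funext hc]
  fun_prop

end PolynomialCurve

section PolynomialCurveNorm

variable {V : Type*} [NormedAddCommGroup V] [InnerProductSpace ℝ V]

theorem IsPolynomialCurve.exists_polynomial_eval_eq_norm_sq {f : ℝ → V}
    (hf : IsPolynomialCurve f) : ∃ q : ℝ[X], ∀ t, q.eval t = ‖f t‖ ^ 2 := by
  obtain ⟨d, c, hc⟩ := hf
  refine ⟨∑ i, ∑ j, C (inner ℝ (c i) (c j)) * X ^ ((i : ℕ) + j), fun t => ?_⟩
  rw [hc, ← real_inner_self_eq_norm_sq, sum_inner, eval_finsetSum]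
  refine Finset.sum_congr rfl fun i _ => ?_
  rw [inner_sum, eval_finsetSum]
  refine Finset.sum_congr rfl fun j _ => ?_
  simp only [real_inner_smul_left, real_inner_smul_right, eval_mul, eval_C, eval_pow, eval_X,
    pow_add]
  ring

theorem IsPolynomialCurve.finite_setOf_norm_eq {f : ℝ → V} (hf : IsPolynomialCurve f)
    {r t₀ : ℝ} (ht₀ : ‖f t₀‖ < r) : {t | ‖f t‖ = r}.Finite := by
  obtain ⟨q, hq⟩ := hf.exists_polynomial_eval_eq_norm_sq
  have hq₀ : q - C (r ^ 2) ≠ 0 := by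
    intro h
    have h₀ := congr_arg (eval t₀) h
    rw [eval_sub, eval_C, hq, eval_zero, sub_eq_zero] at h₀
    nlinarith [norm_nonneg (f t₀)]
  refine (finite_setOfPred_isRoot hq₀).subset fun t ht => ?_
  simp [IsRoot, hq, ht.out]

theorem IsPolynomialCurve.finite_frontier_setOf_norm_lt {f : ℝ → V} (hf : IsPolynomialCurve f)
    {r t₀ : ℝ} (ht₀ : ‖f t₀‖ < r) : (frontier {t | ‖f t‖ < r}).Finite :=
  (hf.finite_setOf_norm_eq ht₀).subset (frontier_lt_subset_eq hf.continuous.norm continuous_const)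

theorem finite_connectedComponentsIn_Icc_inter_biUnion_setOf_norm_lt {ι : Type*} {W : Set ι}
    (hW : W.Finite) {f : ι → ℝ → V} (hf : ∀ i ∈ W, IsPolynomialCurve (f i)) {a b r : ℝ}
    (hab : a ≤ b) (hr : ∀ i ∈ W, ∃ t, ‖f i t‖ < r) :
    (connectedComponentsIn (Icc a b ∩ ⋃ i ∈ W, {t | ‖f i t‖ < r})).Finite := by
  refine Real.finite_connectedComponentsIn_of_finite_frontier
    (isBounded_Icc a b |>.subset inter_subset_left) ?_
  refine (Finite.union (s := frontier (Icc a b)) ?_ (hW.biUnion fun i hi => ?_)).subset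
    ((frontier_inter_subset _ _).trans (union_subset_union inter_subset_left
      (inter_subset_right.trans (hW.frontier_biUnion_subset _))))
  · rw [frontier_Icc hab]
    exact toFinite _
  · obtain ⟨t, ht⟩ := hr i hi
    exact (hf i hi).finite_frontier_setOf_norm_lt ht

end PolynomialCurveNorm

theorem LinearMap.eq_of_forall_expMap_eq {M 𝔤 G : Type*} [AddCommGroup M] [Module ℝ M]
    [NormedAddCommGroup 𝔤] [NormedSpace ℝ 𝔤] {expMap : 𝔤 → G} {r₀ : ℝ} (hr₀ : 0 < r₀)
    (hinj : InjOn expMap (ball 0 r₀)) {A B : M →ₗ[ℝ] 𝔤}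
    (h : ∀ v, expMap (A v) = expMap (B v)) : A = B := by
  ext v
  have hsmall : ∀ x : 𝔤, ∀ᶠ c : ℝ in 𝓝[≠] 0, c • x ∈ ball (0 : 𝔤) r₀ := fun x =>
    nhdsWithin_le_nhds <| ((continuous_id.smul continuous_const).tendsto' 0 0
      (zero_smul ℝ x)).eventually (ball_mem_nhds 0 hr₀)
  obtain ⟨c, ⟨hA, hB⟩, hc⟩ :=
    (((hsmall (A v)).and (hsmall (B v))).and eventually_mem_nhdsWithin).exists
  refine smul_right_injective 𝔤 hc (hinj hA hB ?_)
  simp only [← map_smul, h]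

section OneParameterSubgroup

variable {G : Type*} [Group G] {𝔤 : Type*} [NormedAddCommGroup 𝔤] [NormedSpace ℝ 𝔤]
  {expMap : 𝔤 → G} {r₀ : ℝ} {u : ℝ → G} {Adu : ℝ → 𝔤 →ₗ[ℝ] 𝔤}

theorem map_zero_eq_one_of_map_add (hu : ∀ s t, u (s + t) = u s * u t) : u 0 = 1 := by
  simpa using hu 0 0

theorem adu_zero (hr₀ : 0 < r₀) (hinj : InjOn expMap (ball 0 r₀))
    (hu : ∀ s t, u (s + t) = u s * u t)
    (hequiv : ∀ t v, u t * expMap v * (u t)⁻¹ = expMap (Adu t v)) : Adu 0 = LinearMap.id :=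
  LinearMap.eq_of_forall_expMap_eq hr₀ hinj fun v => by
    simp [← hequiv, map_zero_eq_one_of_map_add hu]

theorem adu_add (hr₀ : 0 < r₀) (hinj : InjOn expMap (ball 0 r₀))
    (hu : ∀ s t, u (s + t) = u s * u t)
    (hequiv : ∀ t v, u t * expMap v * (u t)⁻¹ = expMap (Adu t v)) (s t : ℝ) :
    Adu (s + t) = Adu s ∘ₗ Adu t :=
  LinearMap.eq_of_forall_expMap_eq hr₀ hinj fun v => by
    rw [LinearMap.comp_apply, ← hequiv, ← hequiv, ← hequiv, hu]
    group

theorem adu_neg_apply_adu (hr₀ : 0 < r₀) (hinj : InjOn expMap (ball 0 r₀))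
    (hu : ∀ s t, u (s + t) = u s * u t)
    (hequiv : ∀ t v, u t * expMap v * (u t)⁻¹ = expMap (Adu t v)) (t : ℝ) (w : 𝔤) :
    Adu (-t) (Adu t w) = w := by
  rw [← LinearMap.comp_apply, ← adu_add hr₀ hinj hu hequiv, neg_add_cancel,
    adu_zero hr₀ hinj hu hequiv, LinearMap.id_apply]

theorem adu_apply_adu_neg (hr₀ : 0 < r₀) (hinj : InjOn expMap (ball 0 r₀))
    (hu : ∀ s t, u (s + t) = u s * u t)
    (hequiv : ∀ t v, u t * expMap v * (u t)⁻¹ = expMap (Adu t v)) (t : ℝ) (w : 𝔤) :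
    Adu t (Adu (-t) w) = w := by
  simpa using adu_neg_apply_adu hr₀ hinj hu hequiv (-t) w

theorem exists_conj_eq_expMap_iff (hr₀ : 0 < r₀) (hinj : InjOn expMap (ball 0 r₀))
    (hu : ∀ s t, u (s + t) = u s * u t)
    (hequiv : ∀ t v, u t * expMap v * (u t)⁻¹ = expMap (Adu t v)) (t δ : ℝ) (h : G) :
    (∃ v ∈ ball (0 : 𝔤) δ, u t * h * (u t)⁻¹ = expMap v) ↔ ∃ w, expMap w = h ∧ ‖Adu t w‖ < δ := by
  constructor
  · rintro ⟨v, hv, hvh⟩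
    refine ⟨Adu (-t) v, ?_, by rwa [adu_apply_adu_neg hr₀ hinj hu hequiv, ← mem_ball_zero_iff]⟩
    have hinv : u (-t) = (u t)⁻¹ :=
      eq_inv_of_mul_eq_one_left (by rw [← hu, neg_add_cancel, map_zero_eq_one_of_map_add hu])
    rw [← hequiv, ← hvh, hinv]
    group
  · rintro ⟨w, rfl, hw⟩
    exact ⟨Adu t w, mem_ball_zero_iff.2 hw, hequiv t w⟩

theorem eq_of_expMap_eq_of_norm_adu_lt (hr₀ : 0 < r₀) (hinj : InjOn expMap (ball 0 r₀))
    (hu : ∀ s t, u (s + t) = u s * u t)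
    (hequiv : ∀ t v, u t * expMap v * (u t)⁻¹ = expMap (Adu t v)) {w w' : 𝔤}
    (hexp : expMap w = expMap w') (t : ℝ) (hw : ‖Adu t w‖ < r₀) (hw' : ‖Adu t w'‖ < r₀) :
    w = w' := by
  have h : Adu t w = Adu t w' :=
    hinj (mem_ball_zero_iff.2 hw) (mem_ball_zero_iff.2 hw') (by rw [← hequiv, ← hequiv, hexp])
  rw [← adu_neg_apply_adu hr₀ hinj hu hequiv t w, h, adu_neg_apply_adu hr₀ hinj hu hequiv]

variable [FiniteDimensional ℝ 𝔤]

theorem continuous_adu (hAdpoly : ∀ v, IsPolynomialCurve fun t => Adu t v) :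
    Continuous fun t => (Adu t).toContinuousLinearMap :=
  continuous_clm_apply.2 fun v => (hAdpoly v).continuous

theorem eventually_norm_adu_lt (hr₀ : 0 < r₀) (hinj : InjOn expMap (ball 0 r₀))
    (hu : ∀ s t, u (s + t) = u s * u t)
    (hequiv : ∀ t v, u t * expMap v * (u t)⁻¹ = expMap (Adu t v))
    (hAdpoly : ∀ v, IsPolynomialCurve fun t => Adu t v) {δ : ℝ} (hδ0 : 0 ≤ δ) (hδ : δ < r₀) :
    ∀ᶠ τ in 𝓝 (0 : ℝ), ∀ v : 𝔤, ‖v‖ < δ → ‖Adu τ v‖ < r₀ := by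
  set A := fun τ => (Adu τ).toContinuousLinearMap
  have hA0 : ‖A 0‖ * δ < r₀ := by
    have hnorm : ‖A 0‖ ≤ 1 := (A 0).opNorm_le_bound zero_le_one fun v => by
      simp [A, adu_zero hr₀ hinj hu hequiv]
    nlinarith
  filter_upwards [((continuous_adu hAdpoly).norm.mul continuous_const).continuousAt.eventually_lt
    continuousAt_const hA0] with τ hτ v hv
  calc ‖Adu τ v‖ = ‖A τ v‖ := rfl
    _ ≤ ‖A τ‖ * ‖v‖ := (A τ).le_opNorm v
    _ ≤ ‖A τ‖ * δ := by gcongr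
    _ < r₀ := hτ

theorem locallyFinite_setOf_expMap_eq_and_norm_adu_lt (hr₀ : 0 < r₀)
    (hinj : InjOn expMap (ball 0 r₀)) (hu : ∀ s t, u (s + t) = u s * u t)
    (hequiv : ∀ t v, u t * expMap v * (u t)⁻¹ = expMap (Adu t v))
    (hAdpoly : ∀ v, IsPolynomialCurve fun t => Adu t v) {δ : ℝ} (hδ0 : 0 ≤ δ) (hδ : δ < r₀)
    (h : G) : LocallyFinite fun w : 𝔤 => {t : ℝ | expMap w = h ∧ ‖Adu t w‖ < δ} := by
  intro t₀
  obtain ⟨η, hη, hsmall⟩ :=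
    Metric.eventually_nhds_iff.1 (eventually_norm_adu_lt hr₀ hinj hu hequiv hAdpoly hδ0 hδ)
  refine ⟨ball t₀ (η / 2), ball_mem_nhds t₀ (half_pos hη), Subsingleton.finite ?_⟩
  rintro w ⟨t, ⟨rfl, hw⟩, ht⟩ w' ⟨t', ⟨hexp, hw'⟩, ht'⟩
  refine eq_of_expMap_eq_of_norm_adu_lt hr₀ hinj hu hequiv hexp.symm t' ?_ (hw'.trans hδ)
  have hdist : dist (t' - t) 0 < η := by
    rw [dist_zero_right, Real.norm_eq_abs, ← Real.dist_eq]
    linarith [dist_triangle_right t' t t₀, mem_ball.1 ht, mem_ball.1 ht']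
  rw [← sub_add_cancel t' t, adu_add hr₀ hinj hu hequiv, LinearMap.comp_apply]
  exact hsmall hdist _ hw

theorem finite_setOf_expMap_mem_and_exists_norm_adu_lt [TopologicalSpace G]
    (hexpCont : Continuous expMap) (hr₀ : 0 < r₀) (hinj : InjOn expMap (ball 0 r₀))
    (hu : ∀ s t, u (s + t) = u s * u t)
    (hequiv : ∀ t v, u t * expMap v * (u t)⁻¹ = expMap (Adu t v))
    (hAdpoly : ∀ v, IsPolynomialCurve fun t => Adu t v) {δ : ℝ} (hδ0 : 0 ≤ δ) (hδ : δ < r₀)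
    {D : Set G} (hD : ∀ C, IsCompact C → (D ∩ C).Finite) {K : Set ℝ} (hK : IsCompact K) :
    {w : 𝔤 | expMap w ∈ D ∧ ∃ t ∈ K, ‖Adu t w‖ < δ}.Finite := by
  set φ : ℝ × 𝔤 → G := fun p => expMap (Adu (-p.1) p.2)
  have hφ : Continuous φ := hexpCont.comp
    (((continuous_adu hAdpoly).comp continuous_fst.neg).clm_apply continuous_snd)
  have hvals : (D ∩ φ '' (K ×ˢ closedBall 0 δ)).Finite :=
    hD _ ((hK.prod (isCompact_closedBall 0 δ)).image hφ)
  refine (hvals.biUnion fun h _ => (locallyFinite_setOf_expMap_eq_and_norm_adu_lt hr₀ hinj hu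
    hequiv hAdpoly hδ0 hδ h).finite_nonempty_inter_compact hK).subset ?_
  rintro w ⟨hwD, t, htK, hwt⟩
  refine mem_iUnion₂.2 ⟨expMap w, ⟨hwD, (t, Adu t w), ⟨htK, mem_closedBall_zero_iff.2 hwt.le⟩,
    ?_⟩, t, ⟨rfl, hwt⟩, htK⟩
  simp [φ, adu_neg_apply_adu hr₀ hinj hu hequiv]

end OneParameterSubgroup

theorem finitely_many_components_of_small_injectivity_radius_general
    {G : Type*} [Group G] [TopologicalSpace G] [IsTopologicalGroup G]
    {𝔤 : Type*} [NormedAddCommGroup 𝔤] [InnerProductSpace ℝ 𝔤] [FiniteDimensional ℝ 𝔤]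
    (expMap : 𝔤 → G) (hexpCont : Continuous expMap)
    (r₀ : ℝ) (hr₀ : 0 < r₀)
    (hinj : Set.InjOn expMap (Metric.ball 0 r₀))
    (Γ : Subgroup G) (hΓ : DiscreteTopology Γ)
    (u : ℝ → G) (hu : ∀ s t : ℝ, u (s + t) = u s * u t)
    (Adu : ℝ → 𝔤 →ₗ[ℝ] 𝔤)
    (hAdpoly : ∀ v : 𝔤, ∃ (d : ℕ) (c : Fin d → 𝔤),
      ∀ t : ℝ, Adu t v = ∑ i : Fin d, t ^ (i : ℕ) • c i)
    (hequiv : ∀ (t : ℝ) (v : 𝔤), u t * expMap v * (u t)⁻¹ = expMap (Adu t v))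
    (g : G) (T δ : ℝ) (hT : 0 < T) (hδ0 : 0 < δ) (hδ : δ < r₀) :
    {C : Set ℝ |
      ∃ t ∈ {t ∈ Set.Icc (0 : ℝ) T | ∃ γ ∈ Γ, γ ≠ 1 ∧
        ∃ v ∈ Metric.ball (0 : 𝔤) δ, u t * (g * γ * g⁻¹) * (u t)⁻¹ = expMap v},
      C = connectedComponentIn
        {t ∈ Set.Icc (0 : ℝ) T | ∃ γ ∈ Γ, γ ≠ 1 ∧
          ∃ v ∈ Metric.ball (0 : 𝔤) δ, u t * (g * γ * g⁻¹) * (u t)⁻¹ = expMap v}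
        t}.Finite := by
  set W : Set 𝔤 :=
    {w | (∃ γ ∈ Γ, γ ≠ 1 ∧ expMap w = g * γ * g⁻¹) ∧ ∃ t ∈ Icc 0 T, ‖Adu t w‖ < δ}
  have hS : {t ∈ Icc (0 : ℝ) T | ∃ γ ∈ Γ, γ ≠ 1 ∧
      ∃ v ∈ ball (0 : 𝔤) δ, u t * (g * γ * g⁻¹) * (u t)⁻¹ = expMap v} =
      Icc 0 T ∩ ⋃ w ∈ W, {t | ‖Adu t w‖ < δ} := by
    ext t
    simp only [mem_ofPred_eq, mem_inter_iff, mem_iUnion, exists_prop,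
      exists_conj_eq_expMap_iff hr₀ hinj hu hequiv]
    constructor
    · rintro ⟨ht, γ, hγ, hγ1, w, hw, hwt⟩
      exact ⟨ht, w, ⟨⟨γ, hγ, hγ1, hw⟩, t, ht, hwt⟩, hwt⟩
    · rintro ⟨ht, w, ⟨⟨γ, hγ, hγ1, hw⟩, -⟩, hwt⟩
      exact ⟨ht, γ, hγ, hγ1, w, hw, hwt⟩
  have hW : W.Finite := by
    refine (finite_setOf_expMap_mem_and_exists_norm_adu_lt hexpCont hr₀ hinj hu hequiv hAdpoly
      hδ0.le hδ (D := (fun γ => g * γ * g⁻¹) '' Γ) (K := Icc 0 T)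
      (fun C hC => Γ.finite_conj_inter_of_isCompact g hC) isCompact_Icc).subset ?_
    rintro w ⟨⟨γ, hγ, -, hw⟩, ht⟩
    exact ⟨⟨γ, hγ, hw.symm⟩, ht⟩
  change (connectedComponentsIn _).Finite
  rw [hS]
  exact finite_connectedComponentsIn_Icc_inter_biUnion_setOf_norm_lt hW (fun w _ => hAdpoly w)
    hT.le fun w hw => hw.2.imp fun _ => And.right

/-- Let `G` be a Lie group with Lie algebra `𝔤` (an inner product space), exponential map
`expMap` injective on the ball of radius `r₀`, and a one-parameter unipotent subgroup
`u : ℝ → G` whose adjoint action `Adu t` is polynomial in `t` and satisfies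
`u_t · exp(v) · u_t⁻¹ = exp(Adu t v)`. Let `Γ` be a discrete subgroup of `G` and
`x = gΓ ∈ G/Γ`, so that the stabilizer of `u_t x` is `u_t g Γ g⁻¹ u_t⁻¹`. Then for any
`T > 0` and `0 < δ < r₀`, the set `{t ∈ [0, T] : G_{u_t x} ∩ B_δ ≠ {e}}` has only
finitely many connected components. -/
theorem finitely_many_components_of_small_injectivity_radius
    {G : Type*} [Group G] [TopologicalSpace G] [IsTopologicalGroup G]
    {𝔤 : Type*} [NormedAddCommGroup 𝔤] [InnerProductSpace ℝ 𝔤] [FiniteDimensional ℝ 𝔤]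
    (expMap : 𝔤 → G) (hexpCont : Continuous expMap)
    (r₀ : ℝ) (hr₀ : 0 < r₀)
    (hinj : Set.InjOn expMap (Metric.ball 0 r₀))
    (Γ : Subgroup G) (hΓ : DiscreteTopology Γ)
    (u : ℝ → G) (hu : ∀ s t : ℝ, u (s + t) = u s * u t) (hucont : Continuous u)
    (Adu : ℝ → 𝔤 →ₗ[ℝ] 𝔤)
    (hAdpoly : ∀ v : 𝔤, ∃ (d : ℕ) (c : Fin d → 𝔤),
      ∀ t : ℝ, Adu t v = ∑ i : Fin d, t ^ (i : ℕ) • c i)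
    (hequiv : ∀ (t : ℝ) (v : 𝔤), u t * expMap v * (u t)⁻¹ = expMap (Adu t v))
    (g : G) (T δ : ℝ) (hT : 0 < T) (hδ0 : 0 < δ) (hδ : δ < r₀) :
    {C : Set ℝ |
      ∃ t ∈ {t ∈ Set.Icc (0 : ℝ) T | ∃ γ ∈ Γ, γ ≠ 1 ∧
        ∃ v ∈ Metric.ball (0 : 𝔤) δ, u t * (g * γ * g⁻¹) * (u t)⁻¹ = expMap v},
      C = connectedComponentIn
        {t ∈ Set.Icc (0 : ℝ) T | ∃ γ ∈ Γ, γ ≠ 1 ∧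
          ∃ v ∈ Metric.ball (0 : 𝔤) δ, u t * (g * γ * g⁻¹) * (u t)⁻¹ = expMap v}
        t}.Finite :=
  finitely_many_components_of_small_injectivity_radius_general expMap hexpCont r₀ hr₀ hinj Γ hΓ u hu
    Adu hAdpoly hequiv g T δ hT hδ0 hδ
end

section
/- Let V be a finite-dimensional real inner product space and Δ a discrete subgroup that is generated by elements each of norm less than c. If Δ is a lattice in its ℝ-span W, then the covolume of Δ in W is at most c^{dim W}. -/
/-!
Choose `m` linearly independent generators `vᵢ ∈ S`. They lie in the lattice, so `v = b M` for an
integer matrix `M`, nonsingular because `v` is independent; hence `gram v = Mᵀ (gram b) M` and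
`det (gram b) ≤ (det M)² det (gram b) = det (gram v)`. Hadamard's inequality
`det (gram v) ≤ ∏ ‖vᵢ‖²` follows by writing `v` in the Gram–Schmidt orthonormal basis of its span,
where its coordinate matrix is triangular with diagonal entries `⟪eᵢ, vᵢ⟫`, of absolute value
at most `‖vᵢ‖`.
-/

open Set Matrix Module Submodule

open scoped InnerProductSpace

theorem Matrix.gram_sum_smul {𝕜 E ι κ : Type*} [RCLike 𝕜] [SeminormedAddCommGroup E]
    [InnerProductSpace 𝕜 E] [Fintype ι] [Fintype κ] (u : ι → E) (A : Matrix ι κ 𝕜) :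
    gram 𝕜 (fun j ↦ ∑ i, A i j • u i) = Aᴴ * gram 𝕜 u * A := by
  ext j j'
  simp only [gram_apply, mul_apply, conjTranspose_apply, sum_inner, inner_sum, inner_smul_left,
    inner_smul_right, Finset.sum_mul, Finset.mul_sum, RCLike.star_def]
  exact Finset.sum_congr rfl fun i _ ↦ Finset.sum_congr rfl fun i' _ ↦ by ring

section InnerProductSpace

variable {E : Type*} [NormedAddCommGroup E] [InnerProductSpace ℝ E]

theorem det_gram_le_prod_norm_sq_of_finrank_eq {ι : Type*} [LinearOrder ι]
    [LocallyFiniteOrderBot ι] [WellFoundedLT ι] [Fintype ι] [DecidableEq ι] [FiniteDimensional ℝ E]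
    (h : finrank ℝ E = Fintype.card ι) (v : ι → E) :
    (gram ℝ v).det ≤ ∏ i, ‖v i‖ ^ 2 := by
  set e := InnerProductSpace.gramSchmidtOrthonormalBasis h v
  have hdet : (gram ℝ v).det = ∏ i, ⟪e i, v i⟫_ℝ ^ 2 := by
    rw [gram_eq_conjTranspose_mul e, det_mul, det_conjTranspose, Finset.prod_pow, sq,
      ← InnerProductSpace.gramSchmidtOrthonormalBasis_det h v, Basis.det_apply]
    congr 3
  rw [hdet]
  refine Finset.prod_le_prod (fun i _ ↦ sq_nonneg _) fun i _ ↦ ?_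
  simpa [e.norm_eq_one i] using sq_le_sq' (neg_le_of_abs_le (abs_real_inner_le_norm (e i) (v i)))
    (le_of_abs_le (abs_real_inner_le_norm (e i) (v i)))

theorem det_gram_le_prod_norm_sq {ι : Type*} [Fintype ι] [DecidableEq ι] (v : ι → E) :
    (gram ℝ v).det ≤ ∏ i, ‖v i‖ ^ 2 := by
  by_cases hv : LinearIndependent ℝ v
  swap
  · rw [← det_gram_ne_zero_iff_linearIndependent, not_not] at hv
    rw [hv]
    positivity
  have := FiniteDimensional.span_of_finite ℝ (finite_range v)
  let σ := (Fintype.equivFin ι).symm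
  let w : Fin (Fintype.card ι) → span ℝ (range v) := fun k ↦ ⟨v (σ k), subset_span ⟨_, rfl⟩⟩
  have hw : finrank ℝ (span ℝ (range v)) = Fintype.card (Fin (Fintype.card ι)) := by
    rw [finrank_span_eq_card hv, Fintype.card_fin]
  calc (gram ℝ v).det = (gram ℝ w).det := (det_submatrix_equiv_self σ _).symm
    _ ≤ ∏ k, ‖w k‖ ^ 2 := det_gram_le_prod_norm_sq_of_finrank_eq hw w
    _ = ∏ i, ‖v i‖ ^ 2 := Equiv.prod_comp σ (fun i ↦ ‖v i‖ ^ 2)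

theorem det_gram_le_det_gram_of_mem_span_int {ι : Type*} [Fintype ι] [DecidableEq ι]
    {b v : ι → E} (hv : ∀ i, v i ∈ span ℤ (range b)) (hli : LinearIndependent ℝ v) :
    (gram ℝ b).det ≤ (gram ℝ v).det := by
  choose A hA using fun i ↦ (mem_span_range_iff_exists_fun ℤ).1 (hv i)
  let M : Matrix ι ι ℤ := of fun j i ↦ A i j
  have hgram : gram ℝ v = (M.map (↑))ᴴ * gram ℝ b * M.map (↑) := by
    rw [← gram_sum_smul]
    congr 1
    ext i
    simp [M, ← hA i, Int.cast_smul_eq_zsmul]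
  have hdet : (gram ℝ v).det = (M.det : ℝ) ^ 2 * (gram ℝ b).det := by
    rw [hgram, det_mul, det_mul, det_conjTranspose, star_trivial, ← Int.cast_det]
    ring
  have hM : M.det ≠ 0 := by
    intro h
    exact det_gram_ne_zero_iff_linearIndependent.2 hli (by simp [hdet, h])
  have hM1 : (1 : ℝ) ≤ (M.det : ℝ) ^ 2 :=
    mod_cast (one_le_sq_iff_one_le_abs _).2 (Int.one_le_abs hM)
  nlinarith [(posSemidef_gram ℝ b).det_nonneg]

end InnerProductSpace

theorem exists_linearIndependent_fin_finrank_span {K V : Type*} [DivisionRing K] [AddCommGroup V]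
    [Module K V] [FiniteDimensional K V] (S : Set V) :
    ∃ v : Fin (finrank K (span K S)) → V, (∀ i, v i ∈ S) ∧ LinearIndependent K v := by
  obtain ⟨t, htS, hspan, hli⟩ := exists_linearIndependent K S
  have := hli.setFinite.fintype
  have hcard : Fintype.card t = finrank K (span K S) := by
    rw [← hspan, finrank_span_set_eq_card hli, Set.toFinset_card]
  let e := (Fintype.equivFinOfCardEq hcard).symm
  exact ⟨fun i ↦ e i, fun i ↦ htS (e i).2, hli.comp e e.injective⟩

theorem covolume_le_of_small_generators_general
    {V : Type*} [NormedAddCommGroup V] [InnerProductSpace ℝ V] [FiniteDimensional ℝ V]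
    (c : ℝ) (S : Set V) (hS : ∀ v ∈ S, ‖v‖ < c)
    (m : ℕ) (hm : m = Module.finrank ℝ (Submodule.span ℝ S))
    (b : Module.Basis (Fin m) ℤ (Submodule.span ℤ S)) :
    Real.sqrt (Matrix.det (Matrix.of fun i j =>
      (inner ℝ ((b i : V)) ((b j : V)) : ℝ))) ≤ c ^ m := by
  subst hm
  obtain ⟨v, hvS, hv⟩ := exists_linearIndependent_fin_finrank_span (K := ℝ) S
  have hvb (i) : v i ∈ span ℤ (range fun j ↦ (b j : V)) :=
    (mem_span_range_iff_exists_fun ℤ).2 ⟨b.repr ⟨v i, subset_span (hvS i)⟩,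
      by simpa only [coe_sum, coe_smul] using
        congrArg Subtype.val (b.sum_repr ⟨v i, subset_span (hvS i)⟩)⟩
  calc √(gram ℝ fun i ↦ (b i : V)).det ≤ √(∏ i, ‖v i‖ ^ 2) :=
        Real.sqrt_le_sqrt ((det_gram_le_det_gram_of_mem_span_int hvb hv).trans
          (det_gram_le_prod_norm_sq v))
    _ = ∏ i, ‖v i‖ := by rw [Finset.prod_pow, Real.sqrt_sq (by positivity)]
    _ ≤ c ^ _ := by
        simpa using Finset.prod_le_prod (s := Finset.univ) (fun i _ ↦ norm_nonneg _)
          fun i _ ↦ (hS _ (hvS i)).le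

/-- Let `V` be a finite-dimensional real inner product space and `Δ = ℤ-span(S)` a
discrete subgroup generated by elements of norm less than `c`. If `Δ` is a lattice in its
ℝ-span `W` (i.e. it has a ℤ-basis of size `m = dim W`), then the covolume of `Δ` in `W`
(the square root of the Gram determinant of a ℤ-basis) is at most `c ^ dim W`. -/
theorem covolume_le_of_small_generators
    {V : Type*} [NormedAddCommGroup V] [InnerProductSpace ℝ V] [FiniteDimensional ℝ V]
    (c : ℝ) (S : Set V) (hS : ∀ v ∈ S, ‖v‖ < c)
    (hdisc : DiscreteTopology (Submodule.span ℤ S))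
    (m : ℕ) (hm : m = Module.finrank ℝ (Submodule.span ℝ S))
    (b : Module.Basis (Fin m) ℤ (Submodule.span ℤ S)) :
    Real.sqrt (Matrix.det (Matrix.of fun i j =>
      (inner ℝ ((b i : V)) ((b j : V)) : ℝ))) ≤ c ^ m :=
  covolume_le_of_small_generators_general c S hS m hm b
end
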